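/- Let G be a semi-Markovian causal graph with observed variables V, and let X and Y be two disjoint subsets of V. The causal effect of X on Y is identifiable from G if and only if Q[Anc_Y(G_{V∖X})] is identifiable from G. -/

import Mathlib

open scoped Classical

/-- A semi-Markovian causal graph: a DAG over a finite vertex set partitioned into
observed (`obs`) and unobserved (`unobs`) variables, where every unobserved variable
has no parents and exactly two (distinct, observed) children. -/
structure CausalGraph (ν : Type) [Fintype ν] [DecidableEq ν] where
  obs : Finset ν
  unobs : Finset ν
  disj : Disjoint obs unobs
  E : ν → ν → Prop
  edge_mem : ∀ x y, E x y → x ∈ obs ∪ unobs ∧ y ∈ obs ∪ unobs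
  acyclic : ∀ x, ¬ Relation.TransGen E x x
  unobs_no_parent : ∀ u ∈ unobs, ∀ w, ¬ E w u
  unobs_two_children : ∀ u ∈ unobs,
    ∃ a b, a ≠ b ∧ a ∈ obs ∧ b ∈ obs ∧ (∀ w, E u w ↔ w = a ∨ w = b)

namespace CausalGraph

variable {ν : Type} [Fintype ν] [DecidableEq ν]

def verts (G : CausalGraph ν) : Finset ν := G.obs ∪ G.unobs

/-- A structural equation model over the causal graph `G`: finite nonempty domains
(encoded as finite sets of naturals), a pmf for each unobserved variable, and a
conditional pmf (given an assignment to the parents) for each observed variable. -/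
structure SEM (G : CausalGraph ν) where
  dom : ν → Finset ℕ
  dom_ne : ∀ x, (dom x).Nonempty
  pU : ν → ℕ → ℝ
  pU_nonneg : ∀ u n, 0 ≤ pU u n
  pU_sum : ∀ u ∈ G.unobs, ∑ n ∈ dom u, pU u n = 1
  pO : ν → ℕ → (ν → ℕ) → ℝ
  pO_nonneg : ∀ x n pa, 0 ≤ pO x n pa
  pO_sum : ∀ x ∈ G.obs, ∀ pa : ν → ℕ, ∑ n ∈ dom x, pO x n pa = 1
  pO_par : ∀ x n (pa pa' : ν → ℕ), (∀ p, G.E p x → pa p = pa' p) → pO x n pa = pO x n pa'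

namespace SEM

variable {G : CausalGraph ν}

/-- Full assignments: all variables of `G` get values in their domains
(non-vertices are pinned to `0`). -/
noncomputable def fullAssign (M : SEM G) : Finset (ν → ℕ) :=
  Fintype.piFinset (fun x => if x ∈ G.verts then M.dom x else {0})

/-- Observed assignments `dom(V)`: observed variables get values in their domains
(all other coordinates are pinned to `0`). -/
noncomputable def obsAssign (M : SEM G) : Finset (ν → ℕ) :=
  Fintype.piFinset (fun x => if x ∈ G.obs then M.dom x else {0})

/-- `Q^M[S](v) = Σ_u Π_{X ∈ S} P(x | pa_G(X)) Π_{U} P(u)`. -/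
noncomputable def Q (M : SEM G) (S : Finset ν) (v : ν → ℕ) : ℝ :=
  ∑ w ∈ M.fullAssign.filter (fun w => ∀ x ∈ G.obs, w x = v x),
    (∏ x ∈ S, M.pO x (w x) w) * ∏ u ∈ G.unobs, M.pU u (w u)

/-- The observational distribution `P^M(v) = Q^M[V](v)`. -/
noncomputable def P (M : SEM G) (v : ν → ℕ) : ℝ := M.Q G.obs v

/-- Post-interventional probability `P^M_x(y)`: sum of `Q^M[V∖X]` over all observed
realizations consistent with `x` on `X` and `y` on `Y`. -/
noncomputable def Px (M : SEM G) (X : Finset ν) (x : ν → ℕ) (Y : Finset ν) (y : ν → ℕ) : ℝ :=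
  ∑ v ∈ M.obsAssign.filter (fun v => (∀ i ∈ X, v i = x i) ∧ (∀ i ∈ Y, v i = y i)),
    M.Q (G.obs \ X) v

/-- `M ∈ 𝕄⁺(G)`: strictly positive observational distribution. -/
def positive (M : SEM G) : Prop := ∀ v ∈ M.obsAssign, 0 < M.P v

end SEM

/-- The causal effect of `X` on `Y` is identifiable from `G`. -/
def Identifiable (G : CausalGraph ν) (X Y : Finset ν) : Prop :=
  ∀ M₁ M₂ : SEM G, M₁.positive → M₂.positive →
    (∀ i ∈ G.obs, M₁.dom i = M₂.dom i) →
    (∀ v ∈ M₁.obsAssign, M₁.P v = M₂.P v) →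
    ∀ x y : ν → ℕ, (∀ i ∈ X, x i ∈ M₁.dom i) → (∀ i ∈ Y, y i ∈ M₁.dom i) →
      M₁.Px X x Y y = M₂.Px X x Y y

/-- `Q[S]` is identifiable from `G`. -/
def QIdentifiable (G : CausalGraph ν) (S : Finset ν) : Prop :=
  Identifiable G (G.obs \ S) S

/-- The causal effect of `X` on `Y` is g-identifiable from `(𝔸, G)`. -/
def GIdentifiable (G : CausalGraph ν) (𝔸 : Finset (Finset ν)) (X Y : Finset ν) : Prop :=
  ∀ M₁ M₂ : SEM G, M₁.positive → M₂.positive →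
    (∀ i ∈ G.obs, M₁.dom i = M₂.dom i) →
    (∀ A ∈ 𝔸, ∀ v ∈ M₁.obsAssign, M₁.Q A v = M₂.Q A v) →
    ∀ x y : ν → ℕ, (∀ i ∈ X, x i ∈ M₁.dom i) → (∀ i ∈ Y, y i ∈ M₁.dom i) →
      M₁.Px X x Y y = M₂.Px X x Y y

/-- `Q[S]` is g-identifiable from `(𝔸, G)`. -/
def QGIdentifiable (G : CausalGraph ν) (𝔸 : Finset (Finset ν)) (S : Finset ν) : Prop :=
  GIdentifiable G 𝔸 (G.obs \ S) S

/-- Bidirected edge of `G_X` between `a` and `b`: distinct members of `X` sharing an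
unobserved parent (whose two children then necessarily both lie in `X`). -/
def biEdge (G : CausalGraph ν) (X : Finset ν) (a b : ν) : Prop :=
  a ≠ b ∧ a ∈ X ∧ b ∈ X ∧ ∃ u ∈ G.unobs, G.E u a ∧ G.E u b

/-- `X` is a single c-component of `G`. -/
def SingleC (G : CausalGraph ν) (X : Finset ν) : Prop :=
  X.Nonempty ∧ ∀ a ∈ X, ∀ b ∈ X, Relation.ReflTransGen (G.biEdge X) a b

/-- The c-components of `S`: connected components of the bidirected part of `G_S`. -/
noncomputable def cComponents (G : CausalGraph ν) (S : Finset ν) : Finset (Finset ν) :=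
  S.image (fun a => S.filter (fun b => Relation.ReflTransGen (G.biEdge S) a b))

/-- Directed edge of `G_X` (both endpoints in `X`). -/
def dirEdgeIn (G : CausalGraph ν) (X : Finset ν) (a b : ν) : Prop :=
  a ∈ X ∧ b ∈ X ∧ G.E a b

/-- `Anc_Y(G_X)`: members of `X` having a directed path in `G_X` to some member of `Y`. -/
noncomputable def ancIn (G : CausalGraph ν) (X Y : Finset ν) : Finset ν :=
  X.filter (fun a => ∃ y ∈ Y, Relation.ReflTransGen (G.dirEdgeIn X) a y)

/-- Unobserved vertices of the induced subgraph `G[A]`: unobserved vertices of `G`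
both of whose children lie in `A`. -/
noncomputable def inducedUnobs (G : CausalGraph ν) (A : Finset ν) : Finset ν :=
  G.unobs.filter (fun u => ∀ w, G.E u w → w ∈ A)

/-- The induced subgraph `G[A]`. -/
noncomputable def induced (G : CausalGraph ν) (A : Finset ν) : CausalGraph ν where
  obs := A ∩ G.obs
  unobs := G.inducedUnobs A
  disj := G.disj.mono Finset.inter_subset_right (Finset.filter_subset _ _)
  E x y := G.E x y ∧ x ∈ (A ∩ G.obs) ∪ G.inducedUnobs A ∧ y ∈ (A ∩ G.obs) ∪ G.inducedUnobs A
  edge_mem := fun x y h => ⟨h.2.1, h.2.2⟩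
  acyclic := fun x h => G.acyclic x (Relation.TransGen.mono (fun a b (hab : G.E a b ∧ _) => hab.1) x x h)
  unobs_no_parent := fun u hu w hw =>
    G.unobs_no_parent u (Finset.mem_filter.mp hu).1 w hw.1
  unobs_two_children := by
    intro u hu
    have hu' := Finset.mem_filter.mp hu
    obtain ⟨a, b, hab, ha, hb, hiff⟩ := G.unobs_two_children u hu'.1
    have hEa : G.E u a := (hiff a).mpr (Or.inl rfl)
    have hEb : G.E u b := (hiff b).mpr (Or.inr rfl)
    have haA : a ∈ A := hu'.2 a hEa
    have hbA : b ∈ A := hu'.2 b hEb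
    refine ⟨a, b, hab, Finset.mem_inter.mpr ⟨haA, ha⟩, Finset.mem_inter.mpr ⟨hbA, hb⟩, ?_⟩
    intro w
    constructor
    · intro hw; exact (hiff w).mp hw.1
    · rintro (rfl | rfl)
      · exact ⟨hEa, Finset.mem_union.mpr (Or.inr hu),
          Finset.mem_union.mpr (Or.inl (Finset.mem_inter.mpr ⟨haA, ha⟩))⟩
      · exact ⟨hEb, Finset.mem_union.mpr (Or.inr hu),
          Finset.mem_union.mpr (Or.inl (Finset.mem_inter.mpr ⟨hbA, hb⟩))⟩

/-- `H` is a subgraph of `G`. -/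
def IsSubgraph (H G : CausalGraph ν) : Prop :=
  H.obs ⊆ G.obs ∧ H.unobs ⊆ G.unobs ∧ ∀ a b, H.E a b → G.E a b

/-- `H` is an `R`-rooted c-forest: `R` is the root set of `H`, the observed vertex set of
`H` is a single c-component, and every observed vertex has at most one child in `H`. -/
def IsCForest (H : CausalGraph ν) (R : Finset ν) : Prop :=
  H.obs.filter (fun x => ∀ w, ¬ H.E x w) = R ∧
  H.SingleC H.obs ∧
  ∀ x ∈ H.obs, ∀ w w', H.E x w → H.E x w' → w = w'

end CausalGraph

/-!
Write `A = Anc_Y(G_{V∖X})`. Since `A` is closed under parents inside `V ∖ X`, the variables of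
`V ∖ X` outside `A` can be summed out of `Q[V ∖ X]` one childless variable at a time, each kernel
summing to one. Hence `P_x(y)` is a sum of values of `Q[A]`, which gives one direction, and
`Q[A](v) = P_x(a)` for the values `x, a` that `v` takes on `X, A`.

For the other direction it remains to pass from identifiability of `P_x(y)` to that of `P_x(a)`,
adding the ancestors to the targets one at a time. If `c → b` with `b` already a target, let `b`
also emit a noisy copy of `c` through a kernel which is an invertible matrix. Observationally
equivalent models stay equivalent, and in the new models `P_x(y)`, with `b` now carrying the copy,
is the image of the old `P_x(y, c)` under that kernel, so `P_x(y, c)` is identified.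
-/

lemma exists_rel_of_reflTransGen {α : Type*} {r : α → α → Prop} {s : Set α} {a b : α}
    (h : Relation.ReflTransGen r a b) (ha : a ∉ s) (hb : b ∈ s) : ∃ c ∉ s, ∃ d ∈ s, r c d := by
  induction h with
  | refl => exact absurd hb ha
  | @tail c d _ hcd ih =>
    by_cases hc : c ∈ s
    · exact ih hc
    · exact ⟨c, hc, d, hb, hcd⟩

/-- With probability `1/2` the input is kept, otherwise a uniform value of `D` is drawn, so on `D`
this is the invertible matrix `I/2 + J/(2|D|)`. Inputs outside `D` give the uniform distribution. -/
noncomputable def copyKernel (D : Finset ℕ) (γ' γ : ℕ) : ℝ :=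
  if γ' ∈ D then (if γ = γ' then 2⁻¹ else 0) + (2 * (D.card : ℝ))⁻¹ else ((D.card : ℝ))⁻¹

section copyKernel

variable {D : Finset ℕ}

lemma copyKernel_pos (hD : D.Nonempty) (γ' γ : ℕ) : 0 < copyKernel D γ' γ := by
  have : (0 : ℝ) < D.card := by exact_mod_cast hD.card_pos
  unfold copyKernel
  split_ifs <;> positivity

lemma sum_copyKernel (hD : D.Nonempty) (γ' : ℕ) : ∑ γ ∈ D, copyKernel D γ' γ = 1 := by
  have : (D.card : ℝ) ≠ 0 := by exact_mod_cast hD.card_pos.ne'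
  by_cases h : γ' ∈ D
  · simp only [copyKernel, h, if_true, Finset.sum_add_distrib, Finset.sum_ite_eq', Finset.sum_const,
      nsmul_eq_mul]
    field_simp
    ring
  · simp [copyKernel, h, this]

lemma sum_copyKernel_mul {γ : ℕ} (hγ : γ ∈ D) (u : ℕ → ℝ) :
    ∑ γ' ∈ D, copyKernel D γ' γ * u γ' = 2⁻¹ * u γ + (2 * (D.card : ℝ))⁻¹ * ∑ γ' ∈ D, u γ' := by
  have : ∀ γ' ∈ D, copyKernel D γ' γ * u γ'
      = (if γ = γ' then 2⁻¹ * u γ' else 0) + (2 * (D.card : ℝ))⁻¹ * u γ' := by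
    intro γ' hγ'
    simp only [copyKernel, hγ', if_true]
    split_ifs <;> ring
  rw [Finset.sum_congr rfl this, Finset.sum_add_distrib, Finset.sum_ite_eq, if_pos hγ,
    Finset.mul_sum]

lemma eqOn_of_sum_copyKernel_mul_eq (hD : D.Nonempty) {u₁ u₂ : ℕ → ℝ}
    (h : ∀ γ ∈ D, ∑ γ' ∈ D, copyKernel D γ' γ * u₁ γ' = ∑ γ' ∈ D, copyKernel D γ' γ * u₂ γ') :
    ∀ γ ∈ D, u₁ γ = u₂ γ := by
  have hm : (D.card : ℝ) ≠ 0 := by exact_mod_cast hD.card_pos.ne'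
  set s₁ := ∑ γ' ∈ D, u₁ γ'
  set s₂ := ∑ γ' ∈ D, u₂ γ'
  have hdiff : ∀ γ ∈ D, u₁ γ - u₂ γ = (s₂ - s₁) / D.card := by
    intro γ hγ
    have := h γ hγ
    rw [sum_copyKernel_mul hγ, sum_copyKernel_mul hγ] at this
    field_simp at this ⊢
    linarith
  have hsum : s₁ - s₂ = s₂ - s₁ := by
    rw [← Finset.sum_sub_distrib, Finset.sum_congr rfl hdiff, Finset.sum_const, nsmul_eq_mul]
    field_simp
  intro γ hγ
  have := hdiff γ hγ
  rw [show s₂ - s₁ = 0 by linarith, zero_div] at this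
  linarith

end copyKernel

namespace CausalGraph

variable {ν : Type} [Fintype ν] [DecidableEq ν]

section Graph

variable (G : CausalGraph ν)

lemma ne_of_edge {a b : ν} (h : G.E a b) : a ≠ b :=
  fun e => G.acyclic b (.single (e ▸ h))

lemma notMem_unobs_of_mem_obs {i : ν} (hi : i ∈ G.obs) : i ∉ G.unobs :=
  Finset.disjoint_left.mp G.disj hi

lemma exists_mem_forall_not_edge {R : Finset ν} (hR : R.Nonempty) :
    ∃ m ∈ R, ∀ s ∈ R, ¬ G.E m s := by
  let r := flip (Relation.TransGen G.E)
  have : IsTrans ν r := ⟨fun _ _ _ h₁ h₂ => Relation.TransGen.trans h₂ h₁⟩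
  have : Std.Irrefl r := ⟨G.acyclic⟩
  obtain ⟨m, hm, hmin⟩ := (Finite.wellFounded_of_trans_of_irrefl r).has_min R hR
  exact ⟨m, hm, fun s hs hms => hmin s hs (.single hms)⟩

def IsAncestralIn (S T : Finset ν) : Prop :=
  ∀ p ∈ S, ∀ s ∈ T, G.E p s → p ∈ T

lemma isAncestralIn_ancIn (S Y : Finset ν) : G.IsAncestralIn S (G.ancIn S Y) := by
  intro p hp s hs hps
  obtain ⟨hsS, y, hy, hsy⟩ := Finset.mem_filter.mp hs
  exact Finset.mem_filter.mpr ⟨hp, y, hy, .head ⟨hp, hsS, hps⟩ hsy⟩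

lemma subset_ancIn {S Y : Finset ν} (hY : Y ⊆ S) : Y ⊆ G.ancIn S Y :=
  fun y hy => Finset.mem_filter.mpr ⟨hY hy, y, hy, .refl⟩

lemma exists_edge_into_of_not_ancIn_subset {S Y Y' : Finset ν} (hYY' : Y ⊆ Y')
    (hY'A : Y' ⊆ G.ancIn S Y) (hA : ¬ G.ancIn S Y ⊆ Y') :
    ∃ c ∈ G.ancIn S Y, c ∉ Y' ∧ ∃ b ∈ Y', G.E c b := by
  obtain ⟨a, haA, haY'⟩ := Finset.not_subset.mp hA
  obtain ⟨-, y, hy, hay⟩ := Finset.mem_filter.mp haA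
  obtain ⟨c, hcY', b, hbY', hcS, -, hcb⟩ :=
    exists_rel_of_reflTransGen (s := (Y' : Set ν)) hay haY' (hYY' hy)
  exact ⟨c, G.isAncestralIn_ancIn S Y c hcS b (hY'A hbY') hcb, hcY', b, hbY', hcb⟩

def mergeUnobs (v g : ν → ℕ) : ν → ℕ :=
  fun i => if i ∈ G.unobs then g i else v i

lemma mergeUnobs_update {v g : ν → ℕ} {m : ν} (hm : m ∉ G.unobs) (c : ℕ) :
    G.mergeUnobs (Function.update v m c) g = Function.update (G.mergeUnobs v g) m c := by
  funext i
  by_cases him : i = m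
  · subst him; simp [mergeUnobs, hm]
  · simp [mergeUnobs, Function.update_of_ne him]

end Graph

namespace SEM

variable {G : CausalGraph ν} {M : SEM G}

noncomputable def uAssign (M : SEM G) : Finset (ν → ℕ) :=
  Fintype.piFinset (fun x => if x ∈ G.unobs then M.dom x else {0})

lemma mem_obsAssign_iff {v : ν → ℕ} :
    v ∈ M.obsAssign ↔ (∀ i ∈ G.obs, v i ∈ M.dom i) ∧ ∀ i ∉ G.obs, v i = 0 := by
  simp only [obsAssign, Fintype.mem_piFinset]
  refine ⟨fun h => ⟨fun i hi => by simpa [hi] using h i, fun i hi => by simpa [hi] using h i⟩,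
    fun h i => ?_⟩
  by_cases hi : i ∈ G.obs <;> simp [hi, h.1 i, h.2 i]

lemma mem_uAssign_iff {g : ν → ℕ} :
    g ∈ M.uAssign ↔ (∀ i ∈ G.unobs, g i ∈ M.dom i) ∧ ∀ i ∉ G.unobs, g i = 0 := by
  simp only [uAssign, Fintype.mem_piFinset]
  refine ⟨fun h => ⟨fun i hi => by simpa [hi] using h i, fun i hi => by simpa [hi] using h i⟩,
    fun h i => ?_⟩
  by_cases hi : i ∈ G.unobs <;> simp [hi, h.1 i, h.2 i]

lemma mem_fullAssign_iff {w : ν → ℕ} :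
    w ∈ M.fullAssign ↔ (∀ i ∈ G.obs, w i ∈ M.dom i) ∧ (∀ i ∈ G.unobs, w i ∈ M.dom i) ∧
      ∀ i ∉ G.obs, i ∉ G.unobs → w i = 0 := by
  simp only [fullAssign, verts, Fintype.mem_piFinset, Finset.mem_union]
  refine ⟨fun h => ⟨fun i hi => by simpa [hi] using h i, fun i hi => by simpa [hi] using h i,
    fun i hi hi' => by simpa [hi, hi'] using h i⟩, fun h i => ?_⟩
  by_cases hi : i ∈ G.obs
  · simp [hi, h.1 i hi]
  · by_cases hi' : i ∈ G.unobs <;> simp [hi, hi', h.2.1 i, h.2.2 i]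

lemma obsAssign_congr {M₁ M₂ : SEM G} (h : ∀ i ∈ G.obs, M₁.dom i = M₂.dom i) :
    M₁.obsAssign = M₂.obsAssign := by
  unfold obsAssign
  congr 1
  funext i
  split_ifs with hi
  exacts [h i hi, rfl]

lemma update_mem_obsAssign {v : ν → ℕ} (hv : v ∈ M.obsAssign) {m : ν} (hm : m ∈ G.obs) {c : ℕ}
    (hc : c ∈ M.dom m) : Function.update v m c ∈ M.obsAssign := by
  rw [mem_obsAssign_iff] at hv ⊢
  refine ⟨fun i hi => ?_, fun i hi => ?_⟩
  · by_cases him : i = m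
    · subst him; simpa using hc
    · simpa [him] using hv.1 i hi
  · simpa [show i ≠ m by rintro rfl; exact hi hm] using hv.2 i hi

lemma Q_eq_sum_uAssign {S : Finset ν} (hS : S ⊆ G.obs) {v : ν → ℕ} (hv : v ∈ M.obsAssign) :
    M.Q S v = ∑ g ∈ M.uAssign,
      (∏ x ∈ S, M.pO x (v x) (G.mergeUnobs v g)) * ∏ u ∈ G.unobs, M.pU u (g u) := by
  obtain ⟨hv₁, hv₀⟩ := mem_obsAssign_iff.mp hv
  have merge_restrict : ∀ w ∈ M.fullAssign.filter (fun w => ∀ x ∈ G.obs, w x = v x),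
      G.mergeUnobs v (fun j => if j ∈ G.unobs then w j else 0) = w := by
    intro w hw
    obtain ⟨hw, hwv⟩ := Finset.mem_filter.mp hw
    funext j
    by_cases hj : j ∈ G.unobs
    · simp [mergeUnobs, hj]
    · by_cases hjo : j ∈ G.obs
      · simp [mergeUnobs, hj, hwv j hjo]
      · simp [mergeUnobs, hj, hv₀ j hjo, (mem_fullAssign_iff.mp hw).2.2 j hjo hj]
  refine Finset.sum_nbij' (fun w j => if j ∈ G.unobs then w j else 0) (G.mergeUnobs v)
    ?_ ?_ merge_restrict ?_ ?_
  · intro w hw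
    have hw := mem_fullAssign_iff.mp (Finset.mem_filter.mp hw).1
    exact mem_uAssign_iff.mpr ⟨fun i hi => by simpa [hi] using hw.2.1 i hi,
      fun i hi => by simp [hi]⟩
  · intro g hg
    have hg := mem_uAssign_iff.mp hg
    refine Finset.mem_filter.mpr ⟨mem_fullAssign_iff.mpr ⟨fun i hi => ?_, fun i hi => ?_,
      fun i hi hi' => ?_⟩, fun x hx => ?_⟩
    · simpa [mergeUnobs, G.notMem_unobs_of_mem_obs hi] using hv₁ i hi
    · simpa [mergeUnobs, hi] using hg.1 i hi
    · simpa [mergeUnobs, hi'] using hv₀ i hi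
    · simp [mergeUnobs, G.notMem_unobs_of_mem_obs hx]
  · intro g hg
    funext j
    by_cases hj : j ∈ G.unobs
    · simp [mergeUnobs, hj]
    · simp [hj, (mem_uAssign_iff.mp hg).2 j hj]
  · intro w hw
    simp only [merge_restrict w hw]
    congr 1
    · exact Finset.prod_congr rfl fun x hx => by rw [(Finset.mem_filter.mp hw).2 x (hS hx)]
    · exact Finset.prod_congr rfl fun u hu => by rw [if_pos hu]

lemma pO_update_of_not_edge {x m : ν} (h : ¬ G.E m x) (n c : ℕ) (pa : ν → ℕ) :
    M.pO x n (Function.update pa m c) = M.pO x n pa :=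
  M.pO_par x n _ _ fun p hp => Function.update_of_ne (by rintro rfl; exact h hp) _ _

lemma sum_Q_update_eq_Q_erase {S : Finset ν} (hS : S ⊆ G.obs) {m : ν} (hm : m ∈ S)
    (hnc : ∀ s ∈ S, ¬ G.E m s) {v : ν → ℕ} (hv : v ∈ M.obsAssign) :
    ∑ c ∈ M.dom m, M.Q S (Function.update v m c) = M.Q (S.erase m) v := by
  have hmu : m ∉ G.unobs := G.notMem_unobs_of_mem_obs (hS hm)
  set rest : (ν → ℕ) → ℝ := fun g =>
    (∏ x ∈ S.erase m, M.pO x (v x) (G.mergeUnobs v g)) * ∏ u ∈ G.unobs, M.pU u (g u)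
  have hQ : ∀ c ∈ M.dom m, M.Q S (Function.update v m c)
      = ∑ g ∈ M.uAssign, M.pO m c (G.mergeUnobs v g) * rest g := by
    intro c hc
    rw [Q_eq_sum_uAssign hS (update_mem_obsAssign hv (hS hm) hc)]
    refine Finset.sum_congr rfl fun g _ => ?_
    rw [G.mergeUnobs_update hmu, ← Finset.mul_prod_erase S _ hm, mul_assoc]
    congr 1
    · rw [Function.update_self, pO_update_of_not_edge (fun h => G.ne_of_edge h rfl)]
    · simp only [rest]
      congr 1
      refine Finset.prod_congr rfl fun x hx => ?_
      rw [Function.update_of_ne (Finset.ne_of_mem_erase hx),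
        pO_update_of_not_edge (hnc x (Finset.mem_of_mem_erase hx))]
  rw [Finset.sum_congr rfl hQ, Finset.sum_comm,
    Q_eq_sum_uAssign (fun x hx => hS (Finset.mem_of_mem_erase hx)) hv]
  refine Finset.sum_congr rfl fun g _ => ?_
  rw [← Finset.sum_mul, M.pO_sum m (hS hm), one_mul]

noncomputable def pinned (M : SEM G) (P : Finset ν) (z : ν → ℕ) : Finset (ν → ℕ) :=
  M.obsAssign.filter fun w => ∀ i ∈ P, w i = z i

lemma pinned_congr {M₁ M₂ : SEM G} (h : ∀ i ∈ G.obs, M₁.dom i = M₂.dom i) (P : Finset ν)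
    (z : ν → ℕ) : M₁.pinned P z = M₂.pinned P z := by
  rw [pinned, pinned, obsAssign_congr h]

lemma pinned_eq_singleton {P : Finset ν} (hP : G.obs ⊆ P) {z : ν → ℕ} (hz : z ∈ M.obsAssign) :
    M.pinned P z = {z} := by
  ext w
  simp only [pinned, Finset.mem_filter, Finset.mem_singleton]
  refine ⟨fun ⟨hw, hwz⟩ => funext fun i => ?_, by rintro rfl; exact ⟨hz, fun _ _ => rfl⟩⟩
  by_cases hi : i ∈ G.obs
  · exact hwz i (hP hi)
  · rw [(mem_obsAssign_iff.mp hw).2 i hi, (mem_obsAssign_iff.mp hz).2 i hi]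

lemma sum_pinned_fiberwise {P : Finset ν} {m : ν} (hm : m ∈ G.obs) (hmP : m ∉ P) (z : ν → ℕ)
    (f : (ν → ℕ) → ℝ) :
    ∑ w ∈ M.pinned P z, f w
      = ∑ c ∈ M.dom m, ∑ w ∈ M.pinned (insert m P) (Function.update z m c), f w := by
  have hmaps : ∀ w ∈ M.pinned P z, w m ∈ M.dom m :=
    fun w hw => (mem_obsAssign_iff.mp (Finset.mem_filter.mp hw).1).1 m hm
  rw [← Finset.sum_fiberwise_of_maps_to hmaps]
  refine Finset.sum_congr rfl fun c _ => Finset.sum_congr ?_ fun _ _ => rfl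
  ext w
  simp only [pinned, Finset.mem_filter, Finset.forall_mem_insert, Function.update_self]
  have hupd : ∀ i ∈ P, Function.update z m c i = z i :=
    fun i hi => Function.update_of_ne (by rintro rfl; exact hmP hi) _ _
  constructor
  · rintro ⟨⟨hw, hwP⟩, hwm⟩
    exact ⟨hw, hwm, fun i hi => (hwP i hi).trans (hupd i hi).symm⟩
  · rintro ⟨hw, hwm, hwP⟩
    exact ⟨⟨hw, fun i hi => (hwP i hi).trans (hupd i hi)⟩, hwm⟩

lemma update_mem_pinned {P : Finset ν} {z w : ν → ℕ} (hw : w ∈ M.pinned P z) {m : ν}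
    (hm : m ∈ G.obs) {c : ℕ} (hc : c ∈ M.dom m) :
    Function.update w m c ∈ M.pinned P (Function.update z m c) := by
  obtain ⟨hw, hwz⟩ := Finset.mem_filter.mp hw
  refine Finset.mem_filter.mpr ⟨update_mem_obsAssign hw hm hc, fun i hi => ?_⟩
  by_cases him : i = m
  · subst him; simp
  · simp [Function.update_of_ne him, hwz i hi]

lemma sum_pinned_update {P : Finset ν} {m : ν} (hm : m ∈ G.obs) {z : ν → ℕ}
    (hz : z ∈ M.obsAssign) {c : ℕ} (hc : c ∈ M.dom m) (f : (ν → ℕ) → ℝ) :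
    ∑ w ∈ M.pinned (insert m P) (Function.update z m c), f w
      = ∑ w ∈ M.pinned (insert m P) z, f (Function.update w m c) := by
  have hzm : z m ∈ M.dom m := (mem_obsAssign_iff.mp hz).1 m hm
  have hwm : ∀ {z w}, w ∈ M.pinned (insert m P) z → w m = z m :=
    fun hw => (Finset.mem_filter.mp hw).2 m (Finset.mem_insert_self m P)
  symm
  refine Finset.sum_nbij' (fun w => Function.update w m c) (fun w => Function.update w m (z m))
    (fun w hw => update_mem_pinned hw hm hc) (fun w hw => ?_) (fun w hw => ?_) (fun w hw => ?_)
    fun _ _ => rfl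
  · simpa using update_mem_pinned hw hm hzm
  · simp [← hwm hw]
  · simp [hwm hw]

lemma sum_pinned_Q_erase {S P : Finset ν} (hS : S ⊆ G.obs) {m : ν} (hm : m ∈ S)
    (hnc : ∀ s ∈ S, ¬ G.E m s) (hmP : m ∉ P) {z : ν → ℕ} (hz : z ∈ M.obsAssign) :
    ∑ w ∈ M.pinned P z, M.Q S w = ∑ w ∈ M.pinned (insert m P) z, M.Q (S.erase m) w := by
  rw [sum_pinned_fiberwise (hS hm) hmP,
    Finset.sum_congr rfl fun c hc => sum_pinned_update (hS hm) hz hc (M.Q S), Finset.sum_comm]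
  exact Finset.sum_congr rfl fun w hw =>
    sum_Q_update_eq_Q_erase hS hm hnc (Finset.mem_filter.mp hw).1

lemma sum_pinned_Q_of_isAncestralIn {S T P : Finset ν} (hS : S ⊆ G.obs) (hTS : T ⊆ S)
    (hT : G.IsAncestralIn S T) (hP : Disjoint (S \ T) P) {z : ν → ℕ} (hz : z ∈ M.obsAssign) :
    ∑ w ∈ M.pinned P z, M.Q S w = ∑ w ∈ M.pinned (P ∪ (S \ T)) z, M.Q T w := by
  obtain ⟨n, hn⟩ : ∃ n, (S \ T).card = n := ⟨_, rfl⟩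
  induction n generalizing S P with
  | zero =>
    obtain rfl : S = T :=
      (Finset.sdiff_eq_empty_iff_subset.mp (Finset.card_eq_zero.mp hn)).antisymm hTS
    simp
  | succ n ih =>
    obtain ⟨m, hm, hmin⟩ :=
      G.exists_mem_forall_not_edge (Finset.card_pos.mp (by omega : 0 < (S \ T).card))
    obtain ⟨hmS, hmT⟩ := Finset.mem_sdiff.mp hm
    have hnc : ∀ s ∈ S, ¬ G.E m s := fun s hs hms =>
      if hsT : s ∈ T then hmT (hT m hmS s hsT hms)
      else hmin s (Finset.mem_sdiff.mpr ⟨hs, hsT⟩) hms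
    have herase : S.erase m \ T = (S \ T).erase m := Finset.erase_sdiff_comm S T m
    rw [sum_pinned_Q_erase hS hmS hnc (Finset.disjoint_left.mp hP hm) hz,
      ih (fun x hx => hS (Finset.mem_of_mem_erase hx))
        (fun x hx => Finset.mem_erase.mpr ⟨by rintro rfl; exact hmT hx, hTS hx⟩)
        (fun p hp => hT p (Finset.mem_of_mem_erase hp)) ?_
        (by rw [herase, Finset.card_erase_of_mem hm, hn]; rfl)]
    · congr 2
      rw [herase, Finset.insert_union, ← Finset.union_insert, Finset.insert_erase hm]
    · rw [herase, Finset.disjoint_insert_right]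
      exact ⟨Finset.notMem_erase m _, Finset.disjoint_of_subset_left (Finset.erase_subset m _) hP⟩

lemma Px_congr {X Y : Finset ν} {x y x' y' : ν → ℕ} (hx : ∀ i ∈ X, x i = x' i)
    (hy : ∀ i ∈ Y, y i = y' i) : M.Px X x Y y = M.Px X x' Y y' := by
  unfold Px
  congr 1
  refine Finset.filter_congr fun v _ => ?_
  exact and_congr (forall₂_congr fun i hi => by rw [hx i hi])
    (forall₂_congr fun i hi => by rw [hy i hi])

lemma Px_eq_sum_pinned (X Y : Finset ν) (z : ν → ℕ) :
    M.Px X z Y z = ∑ w ∈ M.pinned (X ∪ Y) z, M.Q (G.obs \ X) w := by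
  unfold Px pinned
  congr 1
  exact Finset.filter_congr fun w _ => Finset.forall_mem_union.symm

lemma Px_compl_eq_Q {S : Finset ν} (hS : S ⊆ G.obs) {z : ν → ℕ} (hz : z ∈ M.obsAssign) :
    M.Px (G.obs \ S) z S z = M.Q S z := by
  rw [Px_eq_sum_pinned, pinned_eq_singleton (by simp) hz, Finset.sum_singleton,
    Finset.sdiff_sdiff_eq_self hS]

lemma Px_eq_sum_pinned_Q_of_isAncestralIn {X Y T : Finset ν} (hYT : Y ⊆ T)
    (hT : T ⊆ G.obs \ X) (hanc : G.IsAncestralIn (G.obs \ X) T) {z : ν → ℕ}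
    (hz : z ∈ M.obsAssign) :
    M.Px X z Y z = ∑ w ∈ M.pinned (X ∪ Y ∪ ((G.obs \ X) \ T)) z, M.Q T w := by
  rw [Px_eq_sum_pinned, sum_pinned_Q_of_isAncestralIn Finset.sdiff_subset hT hanc _ hz]
  refine Finset.disjoint_left.mpr fun i hi hXY => ?_
  obtain ⟨hiX, hiT⟩ := Finset.mem_sdiff.mp hi
  rcases Finset.mem_union.mp hXY with h | h
  exacts [(Finset.mem_sdiff.mp hiX).2 h, hiT (hYT h)]

structure ObsEquiv (M₁ M₂ : SEM G) : Prop where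
  pos₁ : M₁.positive
  pos₂ : M₂.positive
  dom_eq : ∀ i ∈ G.obs, M₁.dom i = M₂.dom i
  P_eq : ∀ v ∈ M₁.obsAssign, M₁.P v = M₂.P v

lemma exists_mem_obsAssign_eqOn (M : SEM G) {X Y : Finset ν} (hX : X ⊆ G.obs) (hY : Y ⊆ G.obs)
    (hXY : Disjoint X Y) {x y : ν → ℕ} (hx : ∀ i ∈ X, x i ∈ M.dom i)
    (hy : ∀ i ∈ Y, y i ∈ M.dom i) :
    ∃ v ∈ M.obsAssign, (∀ i ∈ X, x i = v i) ∧ ∀ i ∈ Y, y i = v i := by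
  refine ⟨fun i => if i ∈ X then x i else if i ∈ Y then y i
    else if i ∈ G.obs then (M.dom_ne i).choose else 0, mem_obsAssign_iff.mpr ⟨fun i hi => ?_,
      fun i hi => ?_⟩, fun i hi => by simp [hi],
      fun i hi => by simp [hi, Finset.disjoint_right.mp hXY hi]⟩
  · split_ifs with hiX hiY
    exacts [hx i hiX, hy i hiY, (M.dom_ne i).choose_spec]
  · have hiX : i ∉ X := fun h => hi (hX h)
    have hiY : i ∉ Y := fun h => hi (hY h)
    simp [hi, hiX, hiY]

end SEM

variable {G : CausalGraph ν}

open SEM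

lemma identifiable_iff {X Y : Finset ν} (hX : X ⊆ G.obs) (hY : Y ⊆ G.obs) (hXY : Disjoint X Y) :
    G.Identifiable X Y ↔
      ∀ M₁ M₂ : SEM G, M₁.ObsEquiv M₂ → ∀ v ∈ M₁.obsAssign, M₁.Px X v Y v = M₂.Px X v Y v := by
  constructor
  · intro h M₁ M₂ hM v hv
    have hvdom := (mem_obsAssign_iff.mp hv).1
    exact h M₁ M₂ hM.pos₁ hM.pos₂ hM.dom_eq hM.P_eq v v (fun i hi => hvdom i (hX hi))
      (fun i hi => hvdom i (hY hi))
  · intro h M₁ M₂ h₁ h₂ hdom hP x y hx hy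
    obtain ⟨v, hv, hxv, hyv⟩ := M₁.exists_mem_obsAssign_eqOn hX hY hXY hx hy
    rw [Px_congr hxv hyv, Px_congr hxv hyv]
    exact h M₁ M₂ ⟨h₁, h₂, hdom, hP⟩ v hv

lemma qIdentifiable_iff {S : Finset ν} (hS : S ⊆ G.obs) :
    G.QIdentifiable S ↔
      ∀ M₁ M₂ : SEM G, M₁.ObsEquiv M₂ → ∀ v ∈ M₁.obsAssign, M₁.Q S v = M₂.Q S v := by
  rw [QIdentifiable, identifiable_iff Finset.sdiff_subset hS Finset.sdiff_disjoint]
  refine forall₂_congr fun M₁ M₂ => forall_congr' fun hM => forall₂_congr fun v hv => ?_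
  rw [Px_compl_eq_Q hS hv, Px_compl_eq_Q hS (obsAssign_congr hM.dom_eq ▸ hv)]

namespace SEM

def unpairFstAt (b : ν) (w : ν → ℕ) : ν → ℕ :=
  Function.update w b (Nat.unpair (w b)).1

/-- `b` additionally records a noisy copy of its parent `c`: the values of `b` become the codes
`Nat.pair β γ` of a value `β` of `b` and a value `γ` of `c`, and the other variables only read the
first component. -/
noncomputable def attachCopy (M : SEM G) (b c : ν) (hb : b ∈ G.obs) (hcb : G.E c b) : SEM G where
  dom i := if i = b then (M.dom b ×ˢ M.dom c).image fun p => Nat.pair p.1 p.2 else M.dom i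
  dom_ne i := by
    split_ifs
    exacts [((M.dom_ne b).product (M.dom_ne c)).image _, M.dom_ne i]
  pU := M.pU
  pU_nonneg := M.pU_nonneg
  pU_sum u hu := by
    rw [if_neg (by rintro rfl; exact G.notMem_unobs_of_mem_obs hb hu)]
    exact M.pU_sum u hu
  pO x n pa :=
    if x = b then
      M.pO b (Nat.unpair n).1 (unpairFstAt b pa) * copyKernel (M.dom c) (pa c) (Nat.unpair n).2
    else M.pO x n (unpairFstAt b pa)
  pO_nonneg x n pa := by
    split_ifs
    exacts [mul_nonneg (M.pO_nonneg _ _ _) (copyKernel_pos (M.dom_ne c) _ _).le, M.pO_nonneg _ _ _]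
  pO_sum x hx pa := by
    split_ifs with h
    · subst h
      rw [Finset.sum_image fun p _ q _ hpq => Prod.ext_iff.mpr (Nat.pair_eq_pair.mp hpq),
        Finset.sum_product]
      simp only [Nat.unpair_pair, ← Finset.mul_sum, sum_copyKernel (M.dom_ne c), mul_one]
      exact M.pO_sum x hx _
    · exact M.pO_sum x hx _
  pO_par x n pa pa' h := by
    have h' : ∀ p, G.E p x → unpairFstAt b pa p = unpairFstAt b pa' p := by
      intro p hp
      by_cases hpb : p = b
      · subst hpb; simp [unpairFstAt, h p hp]
      · simp [unpairFstAt, Function.update_of_ne hpb, h p hp]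
    split_ifs with hx
    · subst hx
      rw [M.pO_par x _ _ _ h', h c hcb]
    · exact M.pO_par x n _ _ h'

variable {M : SEM G} {b c : ν} {hb : b ∈ G.obs} {hcb : G.E c b}

lemma attachCopy_dom_of_ne {i : ν} (hib : i ≠ b) : (M.attachCopy b c hb hcb).dom i = M.dom i := by
  simp [attachCopy, hib]

lemma mem_attachCopy_dom_self {n : ℕ} :
    n ∈ (M.attachCopy b c hb hcb).dom b ↔ ∃ β ∈ M.dom b, ∃ γ ∈ M.dom c, Nat.pair β γ = n := by
  simp [attachCopy, and_assoc]

lemma unpairFstAt_mem_obsAssign {w : ν → ℕ} (hw : w ∈ (M.attachCopy b c hb hcb).obsAssign) :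
    unpairFstAt b w ∈ M.obsAssign := by
  obtain ⟨hw₁, hw₀⟩ := mem_obsAssign_iff.mp hw
  refine mem_obsAssign_iff.mpr ⟨fun i hi => ?_, fun i hi => ?_⟩
  · by_cases hib : i = b
    · subst hib
      obtain ⟨β, hβ, γ, -, hwb⟩ := mem_attachCopy_dom_self.mp (hw₁ i hi)
      simpa [unpairFstAt, ← hwb] using hβ
    · simpa [unpairFstAt, hib, attachCopy_dom_of_ne hib] using hw₁ i hi
  · simpa [unpairFstAt, show i ≠ b by rintro rfl; exact hi hb] using hw₀ i hi

lemma update_pair_mem_obsAssign {w : ν → ℕ} (hw : w ∈ M.obsAssign) {β γ : ℕ} (hβ : β ∈ M.dom b)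
    (hγ : γ ∈ M.dom c) :
    Function.update w b (Nat.pair β γ) ∈ (M.attachCopy b c hb hcb).obsAssign := by
  obtain ⟨hw₁, hw₀⟩ := mem_obsAssign_iff.mp hw
  refine mem_obsAssign_iff.mpr ⟨fun i hi => ?_, fun i hi => ?_⟩
  · by_cases hib : i = b
    · subst hib
      simpa using mem_attachCopy_dom_self.mpr ⟨β, hβ, γ, hγ, rfl⟩
    · simpa [hib, attachCopy_dom_of_ne hib] using hw₁ i hi
  · simpa [show i ≠ b by rintro rfl; exact hi hb] using hw₀ i hi

lemma attachCopy_uAssign : (M.attachCopy b c hb hcb).uAssign = M.uAssign := by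
  unfold uAssign
  congr 1
  funext i
  split_ifs with hi
  · exact attachCopy_dom_of_ne (by rintro rfl; exact G.notMem_unobs_of_mem_obs hb hi)
  · rfl

lemma attachCopy_Q (hc : c ∈ G.obs) {S : Finset ν} (hS : S ⊆ G.obs) (hbS : b ∈ S) {w : ν → ℕ}
    (hw : w ∈ (M.attachCopy b c hb hcb).obsAssign) :
    (M.attachCopy b c hb hcb).Q S w
      = copyKernel (M.dom c) (w c) (Nat.unpair (w b)).2 * M.Q S (unpairFstAt b w) := by
  rw [Q_eq_sum_uAssign hS hw, Q_eq_sum_uAssign hS (unpairFstAt_mem_obsAssign hw),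
    attachCopy_uAssign, Finset.mul_sum]
  refine Finset.sum_congr rfl fun g _ => ?_
  have hmerge : unpairFstAt b (G.mergeUnobs w g) = G.mergeUnobs (unpairFstAt b w) g := by
    simp only [unpairFstAt, mergeUnobs, if_neg (G.notMem_unobs_of_mem_obs hb)]
    exact (G.mergeUnobs_update (G.notMem_unobs_of_mem_obs hb) _).symm
  have hcm : G.mergeUnobs w g c = w c := by simp [mergeUnobs, G.notMem_unobs_of_mem_obs hc]
  have hbw : unpairFstAt b w b = (Nat.unpair (w b)).1 := Function.update_self _ _ _
  have hprod : ∏ x ∈ S.erase b, M.pO x (unpairFstAt b w x) (G.mergeUnobs (unpairFstAt b w) g)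
      = ∏ x ∈ S.erase b, M.pO x (w x) (G.mergeUnobs (unpairFstAt b w) g) :=
    Finset.prod_congr rfl fun x hx => by
      rw [unpairFstAt, Function.update_of_ne (Finset.ne_of_mem_erase hx)]
  rw [← Finset.mul_prod_erase S _ hbS, ← Finset.mul_prod_erase S _ hbS]
  simp only [attachCopy, if_true]
  rw [Finset.prod_congr rfl fun x hx => if_neg (Finset.ne_of_mem_erase hx), hmerge, hcm, hprod,
    hbw]
  ring

lemma attachCopy_P (hc : c ∈ G.obs) {w : ν → ℕ} (hw : w ∈ (M.attachCopy b c hb hcb).obsAssign) :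
    (M.attachCopy b c hb hcb).P w
      = copyKernel (M.dom c) (w c) (Nat.unpair (w b)).2 * M.P (unpairFstAt b w) :=
  attachCopy_Q hc subset_rfl hb hw

lemma ObsEquiv.attachCopy {M₁ M₂ : SEM G} (h : M₁.ObsEquiv M₂) (hc : c ∈ G.obs) :
    (M₁.attachCopy b c hb hcb).ObsEquiv (M₂.attachCopy b c hb hcb) := by
  have hdom : ∀ i ∈ G.obs, (M₁.attachCopy b c hb hcb).dom i = (M₂.attachCopy b c hb hcb).dom i := by
    intro i hi
    simp only [SEM.attachCopy, h.dom_eq b hb, h.dom_eq c hc, h.dom_eq i hi]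
  have hpos : ∀ {M : SEM G}, M.positive → (M.attachCopy b c hb hcb).positive := by
    intro M hM w hw
    rw [attachCopy_P hc hw]
    exact mul_pos (copyKernel_pos (M.dom_ne c) _ _) (hM _ (unpairFstAt_mem_obsAssign hw))
  refine ⟨hpos h.pos₁, hpos h.pos₂, hdom, fun w hw => ?_⟩
  rw [attachCopy_P hc hw, attachCopy_P hc (obsAssign_congr hdom ▸ hw), h.dom_eq c hc,
    h.P_eq _ (unpairFstAt_mem_obsAssign hw)]

lemma sum_pinned_attachCopy_Q (hc : c ∈ G.obs) {S P : Finset ν} (hS : S ⊆ G.obs) (hbS : b ∈ S)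
    (hbP : b ∈ P) {v : ν → ℕ} {γ : ℕ} (hγ : γ ∈ M.dom c) :
    ∑ w ∈ (M.attachCopy b c hb hcb).pinned P (Function.update v b (Nat.pair (v b) γ)),
        (M.attachCopy b c hb hcb).Q S w
      = ∑ w ∈ M.pinned P v, copyKernel (M.dom c) (w c) γ * M.Q S w := by
  have hcb' : c ≠ b := G.ne_of_edge hcb
  have hwb : ∀ {w : ν → ℕ} {z : ν → ℕ} {N : SEM G}, w ∈ N.pinned P z → w b = z b :=
    fun hw => (Finset.mem_filter.mp hw).2 b hbP
  refine Finset.sum_nbij' (unpairFstAt b) (fun w => Function.update w b (Nat.pair (w b) γ))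
    (fun w hw => ?_) (fun w hw => ?_) (fun w hw => ?_) (fun w hw => ?_) (fun w hw => ?_)
  · obtain ⟨hw', hwP⟩ := Finset.mem_filter.mp hw
    refine Finset.mem_filter.mpr ⟨unpairFstAt_mem_obsAssign hw', fun i hi => ?_⟩
    by_cases hib : i = b
    · subst hib; simp [unpairFstAt, hwb hw]
    · simpa [unpairFstAt, hib] using hwP i hi
  · obtain ⟨hw', hwP⟩ := Finset.mem_filter.mp hw
    have hwdom := (mem_obsAssign_iff.mp hw').1
    refine Finset.mem_filter.mpr ⟨update_pair_mem_obsAssign hw' (hwdom b hb) hγ, fun i hi => ?_⟩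
    by_cases hib : i = b
    · subst hib; simp [hwb hw]
    · simpa [hib] using hwP i hi
  · simp [unpairFstAt, hwb hw]
  · simp [unpairFstAt]
  · rw [attachCopy_Q hc hS hbS (Finset.mem_filter.mp hw).1, hwb hw]
    simp [unpairFstAt, hcb']

lemma attachCopy_Px (hc : c ∈ G.obs) {X Y : Finset ν} (hbX : b ∉ X) (hbY : b ∈ Y) (hcX : c ∉ X)
    (hcY : c ∉ Y) {v : ν → ℕ} {γ : ℕ} (hγ : γ ∈ M.dom c) :
    (M.attachCopy b c hb hcb).Px X (Function.update v b (Nat.pair (v b) γ)) Y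
        (Function.update v b (Nat.pair (v b) γ))
      = ∑ γ' ∈ M.dom c, copyKernel (M.dom c) γ' γ *
          M.Px X (Function.update v c γ') (insert c Y) (Function.update v c γ') := by
  rw [Px_eq_sum_pinned, sum_pinned_attachCopy_Q hc Finset.sdiff_subset
      (Finset.mem_sdiff.mpr ⟨hb, hbX⟩) (Finset.mem_union_right X hbY) hγ,
    sum_pinned_fiberwise hc (by simp [hcX, hcY])]
  refine Finset.sum_congr rfl fun γ' _ => ?_
  rw [Px_eq_sum_pinned, Finset.mul_sum, Finset.union_insert]
  refine Finset.sum_congr rfl fun w hw => ?_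
  rw [(Finset.mem_filter.mp hw).2 c (Finset.mem_insert_self _ _), Function.update_self]

end SEM

lemma identifiable_insert_of_edge {X Y : Finset ν} {b c : ν} (hX : X ⊆ G.obs) (hY : Y ⊆ G.obs)
    (hXY : Disjoint X Y) (hc : c ∈ G.obs) (hcX : c ∉ X) (hcY : c ∉ Y) (hbY : b ∈ Y)
    (hcb : G.E c b) (hid : G.Identifiable X Y) : G.Identifiable X (insert c Y) := by
  have hb : b ∈ G.obs := hY hbY
  have hbX : b ∉ X := Finset.disjoint_right.mp hXY hbY
  rw [identifiable_iff hX hY hXY] at hid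
  rw [identifiable_iff hX (Finset.insert_subset hc hY)
    (Finset.disjoint_insert_right.mpr ⟨hcX, hXY⟩)]
  intro M₁ M₂ hM v hv
  have hvdom := (mem_obsAssign_iff.mp hv).1
  have key : ∀ γ ∈ M₁.dom c,
      ∑ γ' ∈ M₁.dom c, copyKernel (M₁.dom c) γ' γ *
          M₁.Px X (Function.update v c γ') (insert c Y) (Function.update v c γ')
        = ∑ γ' ∈ M₁.dom c, copyKernel (M₁.dom c) γ' γ *
          M₂.Px X (Function.update v c γ') (insert c Y) (Function.update v c γ') := by
    intro γ hγ
    have := hid _ _ (hM.attachCopy (hb := hb) (hcb := hcb) hc) _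
      (update_pair_mem_obsAssign hv (hvdom b hb) hγ)
    rwa [attachCopy_Px hc hbX hbY hcX hcY hγ,
      attachCopy_Px hc hbX hbY hcX hcY (hM.dom_eq c hc ▸ hγ), ← hM.dom_eq c hc] at this
  simpa using eqOn_of_sum_copyKernel_mul_eq (M₁.dom_ne c) key (v c) (hvdom c hc)

lemma identifiable_ancIn {X Y : Finset ν} (hX : X ⊆ G.obs) (hY : Y ⊆ G.obs)
    (hXY : Disjoint X Y) (hid : G.Identifiable X Y) :
    G.Identifiable X (G.ancIn (G.obs \ X) Y) := by
  set A := G.ancIn (G.obs \ X) Y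
  have hAX : A ⊆ G.obs \ X := Finset.filter_subset _ _
  have hYX : Y ⊆ G.obs \ X := fun y hy =>
    Finset.mem_sdiff.mpr ⟨hY hy, Finset.disjoint_right.mp hXY hy⟩
  suffices ∀ n Y', (A \ Y').card = n → Y ⊆ Y' → Y' ⊆ A → G.Identifiable X Y' →
      G.Identifiable X A from this _ Y rfl subset_rfl (G.subset_ancIn hYX) hid
  intro n
  induction n with
  | zero =>
    intro Y' hn _ hY'A hid'
    rwa [hY'A.antisymm (Finset.sdiff_eq_empty_iff_subset.mp (Finset.card_eq_zero.mp hn))] at hid'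
  | succ n ih =>
    intro Y' hn hYY' hY'A hid'
    have hA : ¬ A ⊆ Y' := fun h => by simp [Finset.sdiff_eq_empty_iff_subset.mpr h] at hn
    obtain ⟨c, hcA, hcY', b, hbY', hcb⟩ := G.exists_edge_into_of_not_ancIn_subset hYY' hY'A hA
    obtain ⟨hc, hcX⟩ := Finset.mem_sdiff.mp (hAX hcA)
    have hY'X : Y' ⊆ G.obs \ X := hY'A.trans hAX
    refine ih (insert c Y') ?_ (hYY'.trans (Finset.subset_insert c Y'))
      (Finset.insert_subset hcA hY'A)
      (identifiable_insert_of_edge hX (hY'X.trans Finset.sdiff_subset)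
        (Finset.disjoint_of_subset_right hY'X Finset.disjoint_sdiff) hc hcX hcY' hbY' hcb hid')
    rw [Finset.sdiff_insert, Finset.card_erase_of_mem (Finset.mem_sdiff.mpr ⟨hcA, hcY'⟩), hn]
    rfl

end CausalGraph

open CausalGraph SEM

/-- Proposition 1, Huang–Valtorta. The causal effect of `X` on `Y` is
identifiable from `G` iff `Q[Anc_Y(G_{V∖X})]` is identifiable from `G`. -/
theorem id_iff_id_ancestors
    {ν : Type} [Fintype ν] [DecidableEq ν] (G : CausalGraph ν)
    (X Y : Finset ν) (hX : X ⊆ G.obs) (hY : Y ⊆ G.obs) (hXY : Disjoint X Y) :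
    G.Identifiable X Y ↔ G.QIdentifiable (G.ancIn (G.obs \ X) Y) := by
  set A := G.ancIn (G.obs \ X) Y
  have hAX : A ⊆ G.obs \ X := Finset.filter_subset _ _
  have hAobs : A ⊆ G.obs := hAX.trans Finset.sdiff_subset
  have hYA : Y ⊆ A := G.subset_ancIn fun y hy =>
    Finset.mem_sdiff.mpr ⟨hY hy, Finset.disjoint_right.mp hXY hy⟩
  have hanc : G.IsAncestralIn (G.obs \ X) A := G.isAncestralIn_ancIn _ _
  have hXA : Disjoint X A := Finset.disjoint_of_subset_right hAX Finset.disjoint_sdiff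
  have hPx : ∀ {M : SEM G} {Y'}, Y' ⊆ A → ∀ {z}, z ∈ M.obsAssign →
      M.Px X z Y' z = ∑ w ∈ M.pinned (X ∪ Y' ∪ ((G.obs \ X) \ A)) z, M.Q A w :=
    fun hY'A _ hz => Px_eq_sum_pinned_Q_of_isAncestralIn hY'A hAX hanc hz
  rw [qIdentifiable_iff hAobs]
  constructor
  · intro hid M₁ M₂ hM v hv
    have hcover : G.obs ⊆ X ∪ A ∪ ((G.obs \ X) \ A) := fun i hi => by
      by_cases hiX : i ∈ X <;> by_cases hiA : i ∈ A <;> simp [hi, hiX, hiA]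
    have hv₂ := obsAssign_congr hM.dom_eq ▸ hv
    have := (identifiable_iff hX hAobs hXA).mp (identifiable_ancIn hX hY hXY hid) M₁ M₂ hM v hv
    rwa [hPx subset_rfl hv, hPx subset_rfl hv₂, pinned_eq_singleton hcover hv,
      pinned_eq_singleton hcover hv₂, Finset.sum_singleton, Finset.sum_singleton] at this
  · intro hQ
    refine (identifiable_iff hX hY hXY).mpr fun M₁ M₂ hM v hv => ?_
    rw [hPx hYA hv, hPx hYA (obsAssign_congr hM.dom_eq ▸ hv), pinned_congr hM.dom_eq]
    exact Finset.sum_congr rfl fun w hw =>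
      hQ M₁ M₂ hM w (obsAssign_congr hM.dom_eq ▸ (Finset.mem_filter.mp hw).1)
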